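/- Let Σ be an (n+k)×(n+k) symmetric positive definite matrix with blocks Σ₁₁, Σ₁₂, Σ₂₁, Σ₂₂, set Σ̃₁₁ = Σ₁₁ − Σ₁₂·Σ₂₂⁻¹·Σ₂₁, let P₀ be a k×k symmetric positive definite matrix, let Σ* be the block matrix with blocks (Σ₁₂·Σ₂₂⁻¹·Σ₂₁ + Δ(Σ̃₁₁), Σ₁₂; Σ₂₁, Σ₂₂), and let Σ₀* be the block matrix with blocks (Σ₁₂·Σ₂₂⁻¹·P₀·Σ₂₂⁻¹·Σ₂₁ + Δ(Σ̃₁₁), Σ₁₂·Σ₂₂⁻¹·P₀; P₀·Σ₂₂⁻¹·Σ₂₁, P₀). Then (Σ₀*)⁻¹ − (Σ*)⁻¹ equals the block matrix whose (2,2)-block is P₀⁻¹ − Σ₂₂⁻¹ and whose other blocks are zero, and consequently I(Σ* ‖ Σ₀*) = I(Σ₂₂ ‖ P₀). -/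

import Mathlib

open Matrix

/-- I-divergence between two positive definite matrices. -/
noncomputable def Idiv {ι : Type} [Fintype ι] [DecidableEq ι]
    (S1 S2 : Matrix ι ι ℝ) : ℝ :=
  (1 / 2) * Real.log (S2.det / S1.det) - (Fintype.card ι : ℝ) / 2
    + (1 / 2) * (S2⁻¹ * S1).trace

/-- `Δ(M)`: the diagonal matrix with the same diagonal as `M`. -/
def deltaOp {ι : Type} [Fintype ι] [DecidableEq ι] (M : Matrix ι ι ℝ) :
    Matrix ι ι ℝ :=
  Matrix.diagonal (fun i => M i i)

lemma trace_fromBlocks' {n k : Type} [Fintype n] [Fintype k] [DecidableEq n] [DecidableEq k]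
    (A : Matrix n n ℝ) (B : Matrix n k ℝ) (C : Matrix k n ℝ) (D : Matrix k k ℝ) :
    (fromBlocks A B C D).trace = A.trace + D.trace := by
  simp [Matrix.trace, Fintype.sum_sum_type, fromBlocks]

lemma genInv {n k : Type} [Fintype n] [Fintype k] [DecidableEq n] [DecidableEq k]
    (B : Matrix n k ℝ) (C : Matrix k n ℝ) (D : Matrix n n ℝ) (E : Matrix k k ℝ)
    (hD : IsUnit D.det) (hE : IsUnit E.det) :
    (fromBlocks (B * E * C + D) (B * E) (E * C) E) *
      (fromBlocks D⁻¹ (-(D⁻¹ * B)) (-(C * D⁻¹)) (E⁻¹ + C * D⁻¹ * B)) = 1 := by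
  rw [fromBlocks_multiply, ← fromBlocks_one]
  have h1 : (B * E * C + D) * D⁻¹ + B * E * -(C * D⁻¹) = 1 := by
    rw [Matrix.add_mul, Matrix.mul_nonsing_inv _ hD, Matrix.mul_neg]
    simp only [Matrix.mul_assoc]; abel
  have h2 : (B * E * C + D) * -(D⁻¹ * B) + B * E * (E⁻¹ + C * D⁻¹ * B) = 0 := by
    rw [Matrix.mul_neg, Matrix.add_mul, Matrix.mul_add,
      Matrix.mul_nonsing_inv_cancel_left _ _ hD,
      Matrix.mul_nonsing_inv_cancel_right _ _ hE]
    simp only [Matrix.mul_assoc]; abel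
  have h3 : E * C * D⁻¹ + E * -(C * D⁻¹) = 0 := by
    rw [Matrix.mul_neg, Matrix.mul_assoc]; abel
  have h4 : E * C * -(D⁻¹ * B) + E * (E⁻¹ + C * D⁻¹ * B) = 1 := by
    rw [Matrix.mul_neg, Matrix.mul_add, Matrix.mul_nonsing_inv _ hE]
    simp only [Matrix.mul_assoc]; abel
  rw [h1, h2, h3, h4]

lemma genDet {n k : Type} [Fintype n] [Fintype k] [DecidableEq n] [DecidableEq k]
    (B : Matrix n k ℝ) (C : Matrix k n ℝ) (D : Matrix n n ℝ) (E : Matrix k k ℝ)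
    (hE : IsUnit E.det) :
    (fromBlocks (B * E * C + D) (B * E) (E * C) E).det = E.det * D.det := by
  haveI : Invertible E := E.invertibleOfIsUnitDet hE
  rw [det_fromBlocks₂₂, invOf_eq_nonsing_inv,
    Matrix.mul_nonsing_inv_cancel_right _ _ hE]
  congr 1
  simp only [Matrix.mul_assoc]
  rw [add_sub_cancel_left]

lemma posdef22 {n k : Type} [Fintype n] [Fintype k] [DecidableEq n] [DecidableEq k]
    {S : Matrix (n ⊕ k) (n ⊕ k) ℝ} (hS : S.PosDef) : S.toBlocks₂₂.PosDef := by
  refine .of_dotProduct_mulVec_pos (hS.1.submatrix Sum.inr) (fun x hx => ?_)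
  have hy : (Sum.elim 0 x : n ⊕ k → ℝ) ≠ 0 := by
    intro h; exact hx (funext fun i => congrFun h (Sum.inr i))
  have := hS.dotProduct_mulVec_pos hy
  convert this using 1
  simp [dotProduct, mulVec, Fintype.sum_sum_type, toBlocks₂₂, Finset.mul_sum]

lemma posdefSchur {n k : Type} [Fintype n] [Fintype k] [DecidableEq n] [DecidableEq k]
    {A : Matrix n n ℝ} {B : Matrix n k ℝ} {D : Matrix k k ℝ}
    (h : (fromBlocks A B Bᴴ D).PosDef) (hD : D.PosDef) :
    (A - B * D⁻¹ * Bᴴ).PosDef := by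
  haveI : Invertible D := D.invertibleOfIsUnitDet hD.det_pos.ne'.isUnit
  refine .of_dotProduct_mulVec_pos ?_ ?_
  · have hA : A.IsHermitian := by
      have h2 := h.1.eq
      rw [fromBlocks_conjTranspose] at h2
      have h11 := congrArg Matrix.toBlocks₁₁ h2
      simpa [toBlocks_fromBlocks₁₁, Matrix.IsSymm] using h11
    refine IsHermitian.sub hA ?_
    have : (B * D⁻¹ * Bᴴ)ᴴ = B * D⁻¹ * Bᴴ := by
      rw [conjTranspose_mul, conjTranspose_mul, conjTranspose_conjTranspose,
        hD.1.inv.eq]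
      rw [Matrix.mul_assoc]
    exact this
  · intro x hx
    have key := schur_complement_eq₂₂ A B x (-((D⁻¹ * Bᴴ) *ᵥ x)) hD.1
    have hz : (Sum.elim x (-((D⁻¹ * Bᴴ) *ᵥ x)) : n ⊕ k → ℝ) ≠ 0 := by
      intro hcontra; exact hx (funext fun i => congrFun hcontra (Sum.inl i))
    have hpos := h.dotProduct_mulVec_pos hz
    rw [dotProduct_mulVec, key] at hpos
    rw [dotProduct_mulVec]
    simpa using hpos

lemma diagPosDef {n : Type} [Fintype n] [DecidableEq n]
    {M : Matrix n n ℝ} (hM : M.PosDef) (i : n) : 0 < M i i := by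
  have hne : (Pi.single i (1:ℝ) : n → ℝ) ≠ 0 := by
    intro h
    have := congrFun h i
    rw [Pi.single_eq_same] at this
    exact one_ne_zero this
  have := hM.dotProduct_mulVec_pos hne
  simpa [dotProduct, mulVec, Pi.single_apply, mul_comm] using this

theorem stmt_6 (n k : ℕ)
    (S : Matrix (Fin n ⊕ Fin k) (Fin n ⊕ Fin k) ℝ) (hS : S.PosDef)
    (S11 : Matrix (Fin n) (Fin n) ℝ) (hS11 : S11 = S.toBlocks₁₁)
    (S12 : Matrix (Fin n) (Fin k) ℝ) (hS12 : S12 = S.toBlocks₁₂)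
    (S21 : Matrix (Fin k) (Fin n) ℝ) (hS21 : S21 = S.toBlocks₂₁)
    (S22 : Matrix (Fin k) (Fin k) ℝ) (hS22 : S22 = S.toBlocks₂₂)
    (St11 : Matrix (Fin n) (Fin n) ℝ) (hSt11 : St11 = S11 - S12 * S22⁻¹ * S21)
    (P0 : Matrix (Fin k) (Fin k) ℝ) (hP0 : P0.PosDef)
    (Sstar : Matrix (Fin n ⊕ Fin k) (Fin n ⊕ Fin k) ℝ)
    (hSstar : Sstar =
      fromBlocks (S12 * S22⁻¹ * S21 + deltaOp St11) S12 S21 S22)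
    (S0star : Matrix (Fin n ⊕ Fin k) (Fin n ⊕ Fin k) ℝ)
    (hS0star : S0star =
      fromBlocks (S12 * S22⁻¹ * P0 * S22⁻¹ * S21 + deltaOp St11)
        (S12 * S22⁻¹ * P0) (P0 * S22⁻¹ * S21) P0) :
    S0star⁻¹ - Sstar⁻¹ = fromBlocks 0 0 0 (P0⁻¹ - S22⁻¹) ∧
    Idiv Sstar S0star = Idiv S22 P0 := by
  have hS22pd : S22.PosDef := hS22 ▸ posdef22 hS
  have hS22det : IsUnit S22.det := hS22pd.det_pos.ne'.isUnit
  have hP0det : IsUnit P0.det := hP0.det_pos.ne'.isUnit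
  -- S21 = S12ᴴ
  have h21 : S.toBlocks₂₁ = S.toBlocks₁₂ᴴ := by
    ext i j
    have := congrFun (congrFun hS.1.eq (Sum.inr i)) (Sum.inl j)
    simpa [toBlocks₂₁, toBlocks₁₂] using this.symm
  have h12H : S12ᴴ = S21 := by rw [hS12, hS21, h21]
  have hfb : S = fromBlocks S11 S12 S12ᴴ S22 := by
    rw [hS11, hS12, hS22, ← h21, fromBlocks_toBlocks]
  -- Schur complement is PosDef
  have hSt11pd : St11.PosDef := by
    have h' := posdefSchur (hfb ▸ hS) hS22pd
    rw [h12H] at h'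
    rwa [hSt11]
  set D : Matrix (Fin n) (Fin n) ℝ := deltaOp St11 with hD
  have hDpd : D.PosDef := Matrix.PosDef.diagonal fun i => diagPosDef hSt11pd i
  have hDdet : IsUnit D.det := hDpd.det_pos.ne'.isUnit
  have e1 : S12 * S22⁻¹ * S22 = S12 := Matrix.nonsing_inv_mul_cancel_right _ _ hS22det
  have e2 : S22 * (S22⁻¹ * S21) = S21 := Matrix.mul_nonsing_inv_cancel_left _ _ hS22det
  have hSstar' : Sstar = fromBlocks ((S12 * S22⁻¹) * S22 * (S22⁻¹ * S21) + D)
      ((S12 * S22⁻¹) * S22) (S22 * (S22⁻¹ * S21)) S22 := by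
    rw [hSstar, e1, e2, Matrix.mul_assoc]
  have hS0star' : S0star = fromBlocks ((S12 * S22⁻¹) * P0 * (S22⁻¹ * S21) + D)
      ((S12 * S22⁻¹) * P0) (P0 * (S22⁻¹ * S21)) P0 := by
    rw [hS0star]; simp only [Matrix.mul_assoc]
  have hXmul := genInv (S12 * S22⁻¹) (S22⁻¹ * S21) D S22 hDdet hS22det
  have hYmul := genInv (S12 * S22⁻¹) (S22⁻¹ * S21) D P0 hDdet hP0det
  have hXinv : Sstar⁻¹ = fromBlocks D⁻¹ (-(D⁻¹ * (S12 * S22⁻¹)))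
      (-((S22⁻¹ * S21) * D⁻¹)) (S22⁻¹ + (S22⁻¹ * S21) * D⁻¹ * (S12 * S22⁻¹)) := by
    rw [hSstar']; exact Matrix.inv_eq_right_inv hXmul
  have hYinv : S0star⁻¹ = fromBlocks D⁻¹ (-(D⁻¹ * (S12 * S22⁻¹)))
      (-((S22⁻¹ * S21) * D⁻¹)) (P0⁻¹ + (S22⁻¹ * S21) * D⁻¹ * (S12 * S22⁻¹)) := by
    rw [hS0star']; exact Matrix.inv_eq_right_inv hYmul
  have hdiff : S0star⁻¹ - Sstar⁻¹ = fromBlocks 0 0 0 (P0⁻¹ - S22⁻¹) := by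
    rw [hYinv, hXinv]
    ext i j
    rcases i with i | i <;> rcases j with j | j <;>
      simp [Matrix.sub_apply, Matrix.add_apply]
  refine ⟨hdiff, ?_⟩
  -- determinants
  have hdetS : Sstar.det = S22.det * D.det := by
    rw [hSstar']; exact genDet _ _ _ _ hS22det
  have hdetS0 : S0star.det = P0.det * D.det := by
    rw [hS0star']; exact genDet _ _ _ _ hP0det
  -- trace
  have hSdet : IsUnit Sstar.det := by
    rw [hSstar']; exact Matrix.isUnit_det_of_right_inverse hXmul
  have hXl : Sstar⁻¹ * Sstar = 1 := Matrix.nonsing_inv_mul _ hSdet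
  have hmul : S0star⁻¹ * Sstar = fromBlocks 0 0 0 (P0⁻¹ - S22⁻¹) * Sstar + 1 := by
    rw [sub_eq_iff_eq_add.mp hdiff, Matrix.add_mul, hXl]
  have htr : (S0star⁻¹ * Sstar).trace = ((n : ℝ) + k) + ((P0⁻¹ * S22).trace - k) := by
    rw [hmul, trace_add, hSstar', fromBlocks_multiply]
    simp only [Matrix.zero_mul, Matrix.mul_zero, add_zero, zero_add]
    rw [trace_fromBlocks', trace_zero, Matrix.sub_mul,
      Matrix.nonsing_inv_mul _ hS22det, trace_sub, trace_one, trace_one]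
    simp [Fintype.card_sum]
    ring
  have hDdetne : D.det ≠ 0 := hDpd.det_pos.ne'
  simp only [Idiv, hdetS, hdetS0, htr]
  rw [mul_div_mul_right _ _ hDdetne]
  simp only [Fintype.card_sum, Fintype.card_fin]
  push_cast
  ring
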